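/- arXiv:1302.1333 — 5 statements merged into one kernel-verified Lean document; each statement's English description precedes it below -/
import Mathlib

section
/- Let H be an n×n invertible Hermitian complex matrix, let ρ be an n×n positive definite matrix with tr(ρ) = 1, and let W be an invertible n×n matrix with W·Wᴴ = ρ. Let G_Y and G_Z be Hermitian matrices and define Y and Z by the relations H⁻¹YH⁻¹ = G_Y·H⁻¹ρH⁻¹ + H⁻¹ρH⁻¹·G_Y and H⁻¹ZH⁻¹ = G_Z·H⁻¹ρH⁻¹ + H⁻¹ρH⁻¹·G_Z. Set Ẇ_Y = H·G_Y·H⁻¹·W and Ẇ_Z = H·G_Z·H⁻¹·W (the horizontal lifts of Y and Z at W). Then (1/2)·tr(Ẇ_Yᴴ·H⁻²·Ẇ_Z + Ẇ_Zᴴ·H⁻²·Ẇ_Y) = (1/2)·tr(H⁻¹·G_Y·H⁻¹·Z). -/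
open Matrix
open scoped ComplexOrder

/-- The induced metric on the base manifold of density matrices (Theorem 1):
`g_H(Ẇ_Y, Ẇ_Z) = (1/2)·tr(H⁻¹ G_Y H⁻¹ Z)` where `Ẇ_Y = H G_Y H⁻¹ W`, `Ẇ_Z = H G_Z H⁻¹ W`
are the horizontal lifts of `Y`, `Z` at a purification `W` of `ρ`. -/
theorem induced_metric_on_base {n : ℕ}
    (H ρ W GY GZ Y Z : Matrix (Fin n) (Fin n) ℂ)
    (hH : H.IsHermitian) (hHinv : IsUnit H.det)
    (hρ : ρ.PosDef) (hρtr : ρ.trace = 1)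
    (hW : IsUnit W.det) (hWρ : W * Wᴴ = ρ)
    (hGY : GY.IsHermitian) (hGZ : GZ.IsHermitian)
    (hY : H⁻¹ * Y * H⁻¹ = GY * (H⁻¹ * ρ * H⁻¹) + (H⁻¹ * ρ * H⁻¹) * GY)
    (hZ : H⁻¹ * Z * H⁻¹ = GZ * (H⁻¹ * ρ * H⁻¹) + (H⁻¹ * ρ * H⁻¹) * GZ) :
    (1 / 2 : ℂ) * ((H * GY * H⁻¹ * W)ᴴ * (H⁻¹ * H⁻¹) * (H * GZ * H⁻¹ * W) +
        (H * GZ * H⁻¹ * W)ᴴ * (H⁻¹ * H⁻¹) * (H * GY * H⁻¹ * W)).trace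
      = (1 / 2 : ℂ) * (H⁻¹ * GY * H⁻¹ * Z).trace := by
  have hHc : (H⁻¹)ᴴ = H⁻¹ := by
    rw [Matrix.conjTranspose_nonsing_inv, hH.eq]
  have h1 : H * H⁻¹ = 1 := Matrix.mul_nonsing_inv H hHinv
  have h2 : H⁻¹ * H = 1 := Matrix.nonsing_inv_mul H hHinv
  have key : ∀ A B : Matrix (Fin n) (Fin n) ℂ, A.IsHermitian →
      ((H * A * H⁻¹ * W)ᴴ * (H⁻¹ * H⁻¹) * (H * B * H⁻¹ * W)).trace
        = (A * B * (H⁻¹ * ρ * H⁻¹)).trace := by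
    intro A B hA
    have e : (H * A * H⁻¹ * W)ᴴ * (H⁻¹ * H⁻¹) * (H * B * H⁻¹ * W)
        = Wᴴ * (H⁻¹ * (A * (B * (H⁻¹ * W)))) := by
      simp only [conjTranspose_mul, hHc, hH.eq, hA.eq, Matrix.mul_assoc]
      rw [← Matrix.mul_assoc H H⁻¹, h1, Matrix.one_mul,
        ← Matrix.mul_assoc H⁻¹ H, h2, Matrix.one_mul]
    rw [e, Matrix.trace_mul_comm, Matrix.mul_assoc, Matrix.trace_mul_comm]
    congr 1
    rw [← hWρ]
    simp only [Matrix.mul_assoc]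
  rw [Matrix.trace_add, key GY GZ hGY, key GZ GY hGZ]
  have hR : (H⁻¹ * GY * H⁻¹ * Z).trace = (GY * (H⁻¹ * Z * H⁻¹)).trace := by
    rw [Matrix.trace_mul_comm]
    rw [show Z * (H⁻¹ * GY * H⁻¹) = (Z * H⁻¹ * GY) * H⁻¹ by
      simp only [Matrix.mul_assoc]]
    rw [Matrix.trace_mul_comm]
    rw [show H⁻¹ * (Z * H⁻¹ * GY) = (H⁻¹ * Z * H⁻¹) * GY by
      simp only [Matrix.mul_assoc]]
    rw [Matrix.trace_mul_comm]
  rw [hR, hZ, Matrix.mul_add, Matrix.trace_add]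
  have t1 : (GY * (GZ * (H⁻¹ * ρ * H⁻¹))).trace = (GY * GZ * (H⁻¹ * ρ * H⁻¹)).trace := by
    simp only [Matrix.mul_assoc]
  have t2 : (GY * ((H⁻¹ * ρ * H⁻¹) * GZ)).trace = (GZ * GY * (H⁻¹ * ρ * H⁻¹)).trace := by
    rw [show GY * ((H⁻¹ * ρ * H⁻¹) * GZ) = (GY * (H⁻¹ * ρ * H⁻¹)) * GZ by
      simp only [Matrix.mul_assoc]]
    rw [Matrix.trace_mul_comm, ← Matrix.mul_assoc]
  rw [t1, t2]
end

section
/- Let H be an n×n invertible Hermitian complex matrix and let t be a real number. Then for all n×n complex matrices X and Y, tr((exp(-itH)·X)ᴴ · H⁻² · (exp(-itH)·Y)) = tr(Xᴴ·H⁻²·Y). In particular, g_H(exp(-itH)·X, exp(-itH)·Y) = g_H(X,Y), i.e. the flow φ_t(W) = exp(-itH)·W of the Hamiltonian vector field h_W = -iHW is an isometry of the dynamic metric g_H, so h is a Killing vector field. -/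
/-! `exp(-itH)` is unitary, being the exponential of a skew-Hermitian matrix, and it commutes
with `H⁻²`, being a limit of polynomials in `H`. A unitary `U` commuting with `M` leaves the
sesquilinear form `(X, Y) ↦ Xᴴ M Y` invariant under `X, Y ↦ U X, U Y`. -/

open Matrix

/-- The dynamic metric `g_H(X,Y) = (1/2)·tr(Xᴴ H⁻² Y + Yᴴ H⁻² X)`. -/
noncomputable def gH {n : ℕ} (H X Y : Matrix (Fin n) (Fin n) ℂ) : ℂ :=
  (1 / 2 : ℂ) * (Xᴴ * (H⁻¹ * H⁻¹) * Y + Yᴴ * (H⁻¹ * H⁻¹) * X).trace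

theorem Matrix.commute_nonsing_inv {n α : Type*} [Fintype n] [DecidableEq n] [CommRing α]
    (A : Matrix n n α) : Commute A A⁻¹ := by
  by_cases hA : IsUnit A.det
  · exact (A.mul_nonsing_inv hA).trans (A.nonsing_inv_mul hA).symm
  · rw [A.nonsing_inv_apply_not_isUnit hA]
    exact Commute.zero_right A

theorem Matrix.exp_mem_unitary_of_mem_skewAdjoint {m 𝔸 : Type*} [Fintype m]
    [DecidableEq m] [NormedRing 𝔸] [NormedAlgebra ℚ 𝔸] [CompleteSpace 𝔸] [StarRing 𝔸]
    [ContinuousStar 𝔸] {A : Matrix m m 𝔸} (hA : A ∈ skewAdjoint (Matrix m m 𝔸)) :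
    NormedSpace.exp A ∈ unitary (Matrix m m 𝔸) := by
  have hstar : star (NormedSpace.exp A) = NormedSpace.exp (-A) := by
    rw [star_eq_conjTranspose, ← exp_conjTranspose, ← star_eq_conjTranspose,
      skewAdjoint.mem_iff.mp hA]
  rw [Unitary.mem_iff, hstar, ← exp_add_of_commute _ _ (Commute.refl A).neg_left,
    ← exp_add_of_commute _ _ (Commute.refl A).neg_right, neg_add_cancel, add_neg_cancel,
    NormedSpace.exp_zero, and_self]

theorem Unitary.star_mul_mul_mul_of_commute {R : Type*} [Monoid R] [StarMul R] {U M : R}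
    (hU : U ∈ unitary R) (hMU : Commute M U) (X Y : R) :
    star (U * X) * M * (U * Y) = star X * M * Y := by
  calc star (U * X) * M * (U * Y) = star X * (star U * (M * U)) * Y := by
        simp only [star_mul, mul_assoc]
    _ = star X * M * Y := by
        rw [hMU.eq, ← mul_assoc (star U), Unitary.star_mul_self_of_mem hU, one_mul]

theorem hamiltonian_flow_isometry_general {n : ℕ} (H : Matrix (Fin n) (Fin n) ℂ)
    (hH : H.IsHermitian) (t : ℝ)
    (X Y : Matrix (Fin n) (Fin n) ℂ) :
    ((NormedSpace.exp ((-(t : ℂ) * Complex.I) • H) * X)ᴴ * (H⁻¹ * H⁻¹) *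
        (NormedSpace.exp ((-(t : ℂ) * Complex.I) • H) * Y)).trace
      = (Xᴴ * (H⁻¹ * H⁻¹) * Y).trace ∧
    gH H (NormedSpace.exp ((-(t : ℂ) * Complex.I) • H) * X)
        (NormedSpace.exp ((-(t : ℂ) * Complex.I) • H) * Y) = gH H X Y := by
  set U := NormedSpace.exp ((-(t : ℂ) * Complex.I) • H)
  have hU : U ∈ unitary (Matrix (Fin n) (Fin n) ℂ) := by
    refine exp_mem_unitary_of_mem_skewAdjoint (hH.isSelfAdjoint.smul_mem_skewAdjoint ?_)
    simp [skewAdjoint.mem_iff]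
  have hcomm : Commute (H⁻¹ * H⁻¹) U :=
    ((H.commute_nonsing_inv.mul_right H.commute_nonsing_inv).symm.smul_right _).exp_right
  have invariant : ∀ V W : Matrix (Fin n) (Fin n) ℂ,
      (U * V)ᴴ * (H⁻¹ * H⁻¹) * (U * W) = Vᴴ * (H⁻¹ * H⁻¹) * W :=
    Unitary.star_mul_mul_mul_of_commute hU hcomm
  exact ⟨by rw [invariant], by simp only [gH, invariant]⟩

/-- The flow `φ_t(W) = exp(-itH)·W` of the Hamiltonian vector field `h_W = -iHW`
is an isometry of the dynamic metric `g_H`, i.e. `h` is a Killing vector field. -/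
theorem hamiltonian_flow_isometry {n : ℕ} (H : Matrix (Fin n) (Fin n) ℂ)
    (hH : H.IsHermitian) (hHinv : IsUnit H.det) (t : ℝ)
    (X Y : Matrix (Fin n) (Fin n) ℂ) :
    ((NormedSpace.exp ((-(t : ℂ) * Complex.I) • H) * X)ᴴ * (H⁻¹ * H⁻¹) *
        (NormedSpace.exp ((-(t : ℂ) * Complex.I) • H) * Y)).trace
      = (Xᴴ * (H⁻¹ * H⁻¹) * Y).trace ∧
    gH H (NormedSpace.exp ((-(t : ℂ) * Complex.I) • H) * X)
        (NormedSpace.exp ((-(t : ℂ) * Complex.I) • H) * Y) = gH H X Y :=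
  hamiltonian_flow_isometry_general H hH t X Y
end

section
/- Let H be an n×n Hermitian complex matrix and let γ : ℝ → (n×n complex matrices) be a curve such that for every t ∈ ℝ, γ is differentiable at t with derivative γ'(t) = -i·H·γ(t) (an integral curve of the Hamiltonian vector field h_W = -iHW). Then the projected curve ρ(t) = γ(t)·γ(t)ᴴ is differentiable at every t with derivative ρ'(t) = -i·(H·ρ(t) - ρ(t)·H); that is, the projection of the integral curve to the base manifold of density matrices satisfies the von Neumann equation. -/
/-! A purification evolving by `W' = a W` with `a` skew-adjoint projects to `ρ = W Wᴴ` with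
`ρ' = a ρ + ρ aᴴ = a ρ - ρ a` by the product rule; for `a = -iH` with `H` Hermitian this is the
von Neumann equation. -/

open Matrix

attribute [local instance] Matrix.linftyOpNormedAddCommGroup Matrix.linftyOpNormedRing
  Matrix.linftyOpNormedAlgebra

-- The `L∞`-operator norm induces the product topology, but not syntactically, so Mathlib's
-- `ContinuousStar` instance for matrices is not found for it.
instance Matrix.linftyOp_continuousStar {m α : Type*} [Fintype m] [NormedAddCommGroup α]
    [Star α] [ContinuousStar α] :
    @ContinuousStar (Matrix m m α)
      (Matrix.linftyOpNormedAddCommGroup :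
        NormedAddCommGroup (Matrix m m α)).toUniformSpace.toTopologicalSpace _ :=
  ⟨(continuous_star : Continuous (star : Matrix m m α → Matrix m m α))⟩

section

variable {A : Type*} [NormedRing A] [NormedAlgebra ℝ A] [StarRing A] [ContinuousStar A]
  [StarModule ℝ A] {γ : ℝ → A} {t : ℝ}

theorem HasDerivAt.mul_star {γ' : A} (h : HasDerivAt γ γ' t) :
    HasDerivAt (fun s => γ s * star (γ s)) (γ' * star (γ t) + γ t * star γ') t :=
  h.mul h.star

theorem HasDerivAt.mul_star_of_mem_skewAdjoint {a : A} (h : HasDerivAt γ (a * γ t) t)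
    (ha : a ∈ skewAdjoint A) :
    HasDerivAt (fun s => γ s * star (γ s)) (a * (γ t * star (γ t)) - γ t * star (γ t) * a) t := by
  refine h.mul_star.congr_deriv ?_
  rw [star_mul, skewAdjoint.mem_iff.mp ha, mul_neg, mul_neg, mul_assoc, mul_assoc, sub_eq_add_neg]

end

/-- If `γ` is an integral curve of the Hamiltonian vector field `h_W = -iHW`, then the
projected curve `ρ(t) = γ(t)·γ(t)ᴴ` on the base manifold of density matrices satisfies
the von Neumann equation `ρ'(t) = -i(Hρ(t) - ρ(t)H)`. -/
theorem projection_satisfies_vonNeumann {n : ℕ} (H : Matrix (Fin n) (Fin n) ℂ)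
    (hH : H.IsHermitian) (γ : ℝ → Matrix (Fin n) (Fin n) ℂ)
    (hγ : ∀ t : ℝ, HasDerivAt γ ((-Complex.I) • (H * γ t)) t) (t : ℝ) :
    HasDerivAt (fun s : ℝ => γ s * (γ s)ᴴ)
      ((-Complex.I) • (H * (γ t * (γ t)ᴴ) - (γ t * (γ t)ᴴ) * H)) t := by
  have hgen : -Complex.I • H ∈ skewAdjoint (Matrix (Fin n) (Fin n) ℂ) :=
    hH.isSelfAdjoint.smul_mem_skewAdjoint (neg_mem Complex.I_mem_skewAdjoint)
  have hW : HasDerivAt γ ((-Complex.I • H) * γ t) t :=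
    (hγ t).congr_deriv (smul_mul_assoc _ _ _).symm
  refine (hW.mul_star_of_mem_skewAdjoint hgen).congr_deriv ?_
  rw [smul_mul_assoc, mul_smul_comm, smul_sub, star_eq_conjTranspose]
end

section
/- Let H be an n×n Hermitian complex matrix, let T > 0, and let Ω be a nonempty open subset of the space of n×n complex matrices. Then there exist a point x ∈ Ω and a positive integer k such that exp(-i·k·T·H)·x ∈ Ω. (Poincaré-type recurrence for the Hamiltonian flow φ_t(W) = exp(-itH)·W.) -/
/-!
The time-`T` flow `U = exp(-iTH)` is unitary, and the unitary group is compact. In a compact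
group the powers of any element return to every neighbourhood of `1`: two powers `U ^ k`,
`U ^ l` with `k < l` come close to a common cluster point, so `U ^ (l - k)` is close to `1`.
Since `V ↦ V * x` is continuous, `U ^ (l - k) * x ∈ Ω` for `x ∈ Ω` once `U ^ (l - k)` is
close enough to `1`.
-/

open Matrix Filter Topology

theorem exists_pow_mem_of_mem_nhds_one {G : Type*} [Group G] [TopologicalSpace G]
    [IsTopologicalGroup G] [CompactSpace G] (g : G) {N : Set G} (hN : N ∈ 𝓝 (1 : G)) :
    ∃ k, 0 < k ∧ g ^ k ∈ N := by
  obtain ⟨a, -, ha⟩ := isCompact_univ.exists_clusterPt (f := map (g ^ ·) atTop) (by simp)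
  have hdiv : Tendsto (fun p : G × G => p.2 * p.1⁻¹) (𝓝 (a, a)) (𝓝 1) :=
    (continuous_snd.mul continuous_fst.inv).tendsto' (a, a) 1 (by simp)
  obtain ⟨P, hP, Q, hQ, hPQ⟩ := mem_nhds_prod_iff.mp (hdiv hN)
  have hfreq : ∃ᶠ k in atTop, g ^ k ∈ P ∩ Q :=
    mapClusterPt_iff_frequently.mp ha _ (inter_mem hP hQ)
  obtain ⟨k, hkP, -⟩ := hfreq.exists
  obtain ⟨l, ⟨-, hlQ⟩, hkl⟩ := (hfreq.and_eventually (eventually_gt_atTop k)).exists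
  refine ⟨l - k, by omega, ?_⟩
  rw [pow_sub g hkl.le]
  exact hPQ (Set.mk_mem_prod hkP hlQ)

namespace Matrix

variable {n 𝕜 : Type*} [Fintype n] [DecidableEq n] [RCLike 𝕜]

theorem isCompact_unitaryGroup : IsCompact (unitaryGroup n 𝕜 : Set (Matrix n n 𝕜)) := by
  have hbox : IsCompact {U : Matrix n n 𝕜 | ∀ i j, ‖U i j‖ ≤ 1} := by
    have := isCompact_univ_pi fun _ : n => isCompact_univ_pi fun _ : n =>
      isCompact_closedBall (0 : 𝕜) 1
    simp only [Set.pi, Set.mem_univ, Metric.mem_closedBall, dist_zero_right, forall_const] at this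
    exact this
  exact hbox.of_isClosed_subset isClosed_unitary fun U hU => entry_norm_bound_of_unitary hU

theorem exp_mem_unitaryGroup_of_mem_skewAdjoint {A : Matrix n n 𝕜}
    (hA : A ∈ skewAdjoint (Matrix n n 𝕜)) : NormedSpace.exp A ∈ unitaryGroup n 𝕜 := by
  rw [mem_unitaryGroup_iff', star_eq_conjTranspose, ← exp_conjTranspose,
    ← star_eq_conjTranspose, skewAdjoint.mem_iff.mp hA,
    ← exp_add_of_commute _ _ (Commute.refl A).neg_left, neg_add_cancel, NormedSpace.exp_zero]

theorem IsHermitian.exp_smul_mem_unitaryGroup {H : Matrix n n 𝕜} (hH : H.IsHermitian) {c : 𝕜}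
    (hc : c ∈ skewAdjoint 𝕜) : NormedSpace.exp (c • H) ∈ unitaryGroup n 𝕜 :=
  exp_mem_unitaryGroup_of_mem_skewAdjoint (hH.isSelfAdjoint.smul_mem_skewAdjoint hc)

end Matrix

theorem poincare_type_recurrence_general {n : ℕ} (H : Matrix (Fin n) (Fin n) ℂ)
    (hH : H.IsHermitian) (T : ℝ)
    (Ω : Set (Matrix (Fin n) (Fin n) ℂ)) (hΩopen : IsOpen Ω) (hΩne : Ω.Nonempty) :
    ∃ x ∈ Ω, ∃ k : ℕ, 0 < k ∧
      NormedSpace.exp ((-((k : ℂ) * (T : ℂ)) * Complex.I) • H) * x ∈ Ω := by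
  obtain ⟨x, hx⟩ := hΩne
  have : CompactSpace (unitaryGroup (Fin n) ℂ) :=
    isCompact_iff_compactSpace.mp isCompact_unitaryGroup
  let U : unitaryGroup (Fin n) ℂ :=
    ⟨_, hH.exp_smul_mem_unitaryGroup (c := -T * Complex.I) (by simp [skewAdjoint.mem_iff])⟩
  have hreturn : {V : unitaryGroup (Fin n) ℂ | (V : Matrix (Fin n) (Fin n) ℂ) * x ∈ Ω} ∈ 𝓝 1 :=
    (hΩopen.preimage (by fun_prop)).mem_nhds (by simpa using hx)
  obtain ⟨k, hk, hUk⟩ := exists_pow_mem_of_mem_nhds_one U hreturn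
  have hflow : NormedSpace.exp ((-((k : ℂ) * (T : ℂ)) * Complex.I) • H) = ↑(U ^ k) := by
    rw [SubmonoidClass.coe_pow, ← exp_nsmul, ← Nat.cast_smul_eq_nsmul ℂ, smul_smul]
    ring_nf
  exact ⟨x, hx, k, hk, hflow ▸ hUk⟩

/-- Poincaré-type recurrence for the Hamiltonian flow `φ_t(W) = exp(-itH)·W`: any
nonempty open set `Ω` of matrices contains a point returning to `Ω` at some time `kT`. -/
theorem poincare_type_recurrence {n : ℕ} (H : Matrix (Fin n) (Fin n) ℂ)
    (hH : H.IsHermitian) (T : ℝ) (hT : 0 < T)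
    (Ω : Set (Matrix (Fin n) (Fin n) ℂ)) (hΩopen : IsOpen Ω) (hΩne : Ω.Nonempty) :
    ∃ x ∈ Ω, ∃ k : ℕ, 0 < k ∧
      NormedSpace.exp ((-((k : ℂ) * (T : ℂ)) * Complex.I) • H) * x ∈ Ω :=
  poincare_type_recurrence_general H hH T Ω hΩopen hΩne
end

section
/- Let H be an n×n Hermitian complex matrix, let W be an n×n complex matrix, and let ε > 0 and T > 0. Then there exists a positive integer k such that ‖exp(-i·k·T·H)·W - W‖ < ε, where ‖·‖ is the Frobenius norm; moreover, the set of positive integers k with this property is infinite. (Strong Poincaré-type recurrence for the Hamiltonian flow φ_t(W) = exp(-itH)·W.) -/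
/-!
Since `H` is Hermitian, `U = exp(-iTH)` is unitary and `exp(-ikTH) = U ^ k`. Left multiplication
by a unitary matrix is an isometry for the Frobenius norm, so the orbit `U ^ k * W` stays in the
compact ball of radius `‖W‖` and has a Cauchy subsequence. Two `ε`-close points `U ^ a * W` and
`U ^ b * W` with `b - a` as large as we like give, after cancelling the isometry `U ^ a`,
`‖U ^ (b - a) * W - W‖ < ε`.
-/

open Matrix

/-- The Frobenius norm `‖X‖ = (tr(Xᴴ·X))^{1/2}` of a complex matrix. -/
noncomputable def frobeniusNorm {n : ℕ} (X : Matrix (Fin n) (Fin n) ℂ) : ℝ :=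
  Real.sqrt (Xᴴ * X).trace.re

open Filter

theorem Isometry.iterate {X : Type*} [PseudoEMetricSpace X] {f : X → X} (hf : Isometry f) :
    ∀ n : ℕ, Isometry f^[n]
  | 0 => isometry_id
  | n + 1 => (hf.iterate n).comp hf

theorem Isometry.frequently_dist_iterate_lt {X : Type*} [PseudoMetricSpace X] {f : X → X}
    (hf : Isometry f) {x : X} {K : Set X} (hK : IsCompact K) (hxK : ∀ k, f^[k] x ∈ K)
    {δ : ℝ} (hδ : 0 < δ) : ∃ᶠ k in atTop, dist (f^[k] x) x < δ := by
  obtain ⟨_, -, φ, hφ, hlim⟩ := hK.tendsto_subseq hxK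
  obtain ⟨N, hN⟩ := Metric.cauchySeq_iff'.1 hlim.cauchySeq δ hδ
  refine frequently_atTop.2 fun a => ⟨φ (N + a) - φ N, ?_, ?_⟩
  · have := hφ.add_le_nat a N
    rw [add_comm a N] at this
    omega
  · have hsplit : φ N + (φ (N + a) - φ N) = φ (N + a) :=
      Nat.add_sub_cancel' (hφ.monotone (Nat.le_add_right N a))
    calc dist (f^[φ (N + a) - φ N] x) x
        = dist (f^[φ N] (f^[φ (N + a) - φ N] x)) (f^[φ N] x) :=
          ((hf.iterate _).dist_eq _ _).symm
      _ = dist (f^[φ (N + a)] x) (f^[φ N] x) := by rw [← Function.iterate_add_apply, hsplit]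
      _ < δ := hN _ (Nat.le_add_right N a)

theorem Matrix.IsHermitian.exp_smul_mem_unitaryGroup_s11 {m : Type*} [Fintype m] [DecidableEq m]
    {H : Matrix m m ℂ} (hH : H.IsHermitian) {z : ℂ} (hz : star z = -z) :
    NormedSpace.exp (z • H) ∈ unitaryGroup m ℂ := by
  rw [mem_unitaryGroup_iff', star_eq_conjTranspose, ← exp_conjTranspose, conjTranspose_smul,
    hH.eq, hz, neg_smul,
    ← Matrix.exp_add_of_commute _ _ (Commute.refl (z • H)).neg_left, neg_add_cancel,
    NormedSpace.exp_zero]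

section Frobenius

attribute [local instance] Matrix.frobeniusNormedAddCommGroup Matrix.frobeniusNormedSpace

variable {𝕜 m n : Type*} [RCLike 𝕜] [Fintype m] [Fintype n]

theorem Matrix.frobenius_norm_sq_eq_re_trace (A : Matrix m n 𝕜) :
    ‖A‖ ^ 2 = RCLike.re (Aᴴ * A).trace := by
  rw [frobenius_norm_def, ← Real.sqrt_eq_rpow, Real.sq_sqrt (by positivity), trace,
    map_sum, Finset.sum_comm]
  refine Finset.sum_congr rfl fun j _ => ?_
  simp only [diag, mul_apply, conjTranspose_apply, map_sum, RCLike.star_def, RCLike.conj_mul]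
  norm_cast

theorem Matrix.frobenius_norm_unitary_mul [DecidableEq m] {U : Matrix m m 𝕜}
    (hU : U ∈ unitaryGroup m 𝕜) (A : Matrix m n 𝕜) : ‖U * A‖ = ‖A‖ := by
  have hUU : Uᴴ * U = 1 := mem_unitaryGroup_iff'.1 hU
  refine (sq_eq_sq₀ (norm_nonneg _) (norm_nonneg _)).1 ?_
  rw [frobenius_norm_sq_eq_re_trace, frobenius_norm_sq_eq_re_trace, conjTranspose_mul,
    Matrix.mul_assoc, ← Matrix.mul_assoc Uᴴ, hUU, Matrix.one_mul]

theorem Matrix.isometry_unitary_mul [DecidableEq m] {U : Matrix m m 𝕜}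
    (hU : U ∈ unitaryGroup m 𝕜) : Isometry (U * · : Matrix m n 𝕜 → Matrix m n 𝕜) :=
  .of_dist_eq fun A B => by
    rw [dist_eq_norm, dist_eq_norm, ← Matrix.mul_sub, frobenius_norm_unitary_mul hU]

theorem frobeniusNorm_eq_norm {n : ℕ} (X : Matrix (Fin n) (Fin n) ℂ) :
    frobeniusNorm X = ‖X‖ := by
  rw [frobeniusNorm, ← RCLike.re_eq_complex_re, ← frobenius_norm_sq_eq_re_trace,
    Real.sqrt_sq (norm_nonneg X)]

theorem Matrix.frequently_frobenius_norm_unitary_pow_mul_sub_lt [DecidableEq m]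
    {U : Matrix m m 𝕜} (hU : U ∈ unitaryGroup m 𝕜) (A : Matrix m n 𝕜) {ε : ℝ} (hε : 0 < ε) :
    ∃ᶠ k in atTop, ‖U ^ k * A - A‖ < ε := by
  have hiter (k : ℕ) : (U * ·)^[k] A = U ^ k * A := by
    induction k with
    | zero => simp
    | succ k ih => rw [Function.iterate_succ_apply', ih, pow_succ', Matrix.mul_assoc]
  have horbit (k : ℕ) : (U * ·)^[k] A ∈ Metric.closedBall 0 ‖A‖ := by
    rw [hiter, mem_closedBall_zero_iff, frobenius_norm_unitary_mul (pow_mem hU k)]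
  simpa only [hiter, dist_eq_norm] using
    (isometry_unitary_mul hU).frequently_dist_iterate_lt (isCompact_closedBall 0 ‖A‖) horbit hε

end Frobenius

theorem strong_poincare_type_recurrence_general {n : ℕ} (H W : Matrix (Fin n) (Fin n) ℂ)
    (hH : H.IsHermitian) (ε T : ℝ) (hε : 0 < ε) :
    (∃ k : ℕ, 0 < k ∧
      frobeniusNorm (NormedSpace.exp ((-((k : ℂ) * (T : ℂ)) * Complex.I) • H) * W - W) < ε) ∧
    {k : ℕ | 0 < k ∧
      frobeniusNorm (NormedSpace.exp ((-((k : ℂ) * (T : ℂ)) * Complex.I) • H) * W - W)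
        < ε}.Infinite := by
  set U := NormedSpace.exp ((-(T : ℂ) * Complex.I) • H)
  have hU : U ∈ unitaryGroup (Fin n) ℂ := hH.exp_smul_mem_unitaryGroup_s11 (by simp)
  have hpow (k : ℕ) : NormedSpace.exp ((-((k : ℂ) * (T : ℂ)) * Complex.I) • H) = U ^ k := by
    rw [← Matrix.exp_nsmul, ← Nat.cast_smul_eq_nsmul ℂ, smul_smul]
    ring_nf
  have hfreq : ∃ᶠ k : ℕ in atTop, 0 < k ∧
      frobeniusNorm (NormedSpace.exp ((-((k : ℂ) * (T : ℂ)) * Complex.I) • H) * W - W) < ε := by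
    simp only [hpow, frobeniusNorm_eq_norm]
    exact ((frequently_frobenius_norm_unitary_pow_mul_sub_lt hU W hε).and_eventually
      (eventually_gt_atTop 0)).mono fun k hk => ⟨hk.2, hk.1⟩
  exact ⟨hfreq.exists, Nat.frequently_atTop_iff_infinite.1 hfreq⟩

/-- Strong Poincaré-type recurrence for the Hamiltonian flow `φ_t(W) = exp(-itH)·W`:
for any `ε > 0` and `T > 0` there is a positive integer `k` with
`‖exp(-ikTH)·W - W‖ < ε`, and the set of such `k` is infinite. -/
theorem strong_poincare_type_recurrence {n : ℕ} (H W : Matrix (Fin n) (Fin n) ℂ)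
    (hH : H.IsHermitian) (ε T : ℝ) (hε : 0 < ε) (hT : 0 < T) :
    (∃ k : ℕ, 0 < k ∧
      frobeniusNorm (NormedSpace.exp ((-((k : ℂ) * (T : ℂ)) * Complex.I) • H) * W - W) < ε) ∧
    {k : ℕ | 0 < k ∧
      frobeniusNorm (NormedSpace.exp ((-((k : ℂ) * (T : ℂ)) * Complex.I) • H) * W - W)
        < ε}.Infinite :=
  strong_poincare_type_recurrence_general H W hH ε T hε
end
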